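/- Let (x_{jk})_{j≠k, j,k∈ℕ} be i.i.d. random vectors in ℝ^p with entrywise E[(x_{jk} x_{jk}^T)²] < ∞. For each n and each configuration i ∈ {2,3,4,5}, the average |Θ_i|^{-1} Σ_{((j,k),(l,m))∈Θ_i} x_{jk} x_{lm}^T over dyads among the first n actors converges in probability, entrywise as n → ∞, to E[x_{jk}] E[x_{jk}]^T; for i = 1 the corresponding average converges in probability to E[x_{jk} x_{jk}^T]. -/

import Mathlib

open MeasureTheory ProbabilityTheory Filter
open scoped BigOperators Topology ENNReal NNReal

/-- The ordered dyads among the first `n` actors: ordered pairs `(i,j)`, `i ≠ j`,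
with `i, j ∈ {0, …, n-1}`. -/
def dyads (n : ℕ) : Finset (ℕ × ℕ) :=
  (Finset.range n ×ˢ Finset.range n).filter fun p => p.1 ≠ p.2

/-- The five configuration sets `Θ_1, …, Θ_5` of ordered dyad pairs among the first `n`
actors: identical, reciprocal, common receiver, common sender, head-to-tail. -/
def theta (n : ℕ) : Fin 5 → Finset ((ℕ × ℕ) × (ℕ × ℕ)) :=
  ![(dyads n ×ˢ dyads n).filter fun q => q.2 = q.1,
    (dyads n ×ˢ dyads n).filter fun q => q.2.1 = q.1.2 ∧ q.2.2 = q.1.1,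
    (dyads n ×ˢ dyads n).filter fun q => q.2.2 = q.1.2 ∧ q.2.1 ≠ q.1.1 ∧ q.2.1 ≠ q.1.2,
    (dyads n ×ˢ dyads n).filter fun q => q.2.1 = q.1.1 ∧ q.2.2 ≠ q.1.2 ∧ q.2.2 ≠ q.1.1,
    (dyads n ×ˢ dyads n).filter fun q =>
      (q.2.1 = q.1.2 ∧ q.2.2 ≠ q.1.1 ∧ q.2.2 ≠ q.1.2) ∨
      (q.2.2 = q.1.1 ∧ q.2.1 ≠ q.1.1 ∧ q.2.1 ≠ q.1.2)]

/-!
Each configuration average is an average of products `x_{jk,a} x_{lm,b}` with a common mean and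
uniformly bounded variances, and two such products are independent, hence uncorrelated, as soon
as their dyad pairs have no dyad in common. A pair of `Θ_1` or `Θ_2` overlaps at most four pairs
of its configuration set, which has `n(n-1)` elements; a pair of `Θ_3`, `Θ_4` or `Θ_5` overlaps at
most `4n(n-1)` pairs, out of at least `n(n-1)(n-2)`. So the variance of the average is `O(1/n)`,
and Chebyshev's inequality gives convergence in probability.
-/

open Finset

lemma dyads_eq_offDiag (n : ℕ) : dyads n = (range n).offDiag := by
  ext
  simp [dyads, and_assoc]

lemma mem_dyads {n : ℕ} {d : ℕ × ℕ} : d ∈ dyads n ↔ d.1 < n ∧ d.2 < n ∧ d.1 ≠ d.2 := by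
  simp [dyads_eq_offDiag]

lemma card_dyads (n : ℕ) : #(dyads n) = n * (n - 1) := by
  rw [dyads_eq_offDiag, offDiag_card, card_range, Nat.mul_sub_one]

lemma tendsto_card_dyads_atTop : Tendsto (fun n => (#(dyads n) : ℝ)) atTop atTop := by
  refine tendsto_natCast_atTop_atTop.comp
    (tendsto_atTop_mono (fun n => ?_) (tendsto_sub_atTop_nat 1))
  rw [card_dyads]
  rcases n with _ | n
  · simp
  · exact Nat.le_mul_of_pos_left _ n.succ_pos

def Overlaps {α : Type*} (q q' : α × α) : Prop :=
  q'.1 = q.1 ∨ q'.1 = q.2 ∨ q'.2 = q.1 ∨ q'.2 = q.2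

instance {α : Type*} [DecidableEq α] : DecidableRel (Overlaps (α := α)) :=
  fun _ _ => by unfold Overlaps; infer_instance

lemma card_filter_overlaps_le_of_subset_product {α : Type*} [DecidableEq α] {S : Finset (α × α)}
    {A : Finset α} (hS : S ⊆ A ×ˢ A) (q : α × α) :
    #{q' ∈ S | Overlaps q q'} ≤ 4 * #A := by
  have hsub : {q' ∈ S | Overlaps q q'} ⊆
      ({q.1} ×ˢ A ∪ {q.2} ×ˢ A) ∪ (A ×ˢ {q.1} ∪ A ×ˢ {q.2}) := by
    intro q' hq'
    obtain ⟨hq'S, hov⟩ := mem_filter.1 hq'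
    obtain ⟨h1, h2⟩ := mem_product.1 (hS hq'S)
    simp only [mem_union, mem_product, mem_singleton]
    rcases hov with h | h | h | h <;> simp [h, h1, h2]
  calc #{q' ∈ S | Overlaps q q'}
      ≤ #({q.1} ×ˢ A ∪ {q.2} ×ˢ A) + #(A ×ˢ {q.1} ∪ A ×ˢ {q.2}) :=
        (card_le_card hsub).trans (card_union_le _ _)
    _ ≤ (#A + #A) + (#A + #A) := by
        gcongr <;> refine (card_union_le _ _).trans_eq ?_ <;> simp
    _ = 4 * #A := by ring

lemma card_filter_overlaps_le_four_of_involutive {α : Type*} [DecidableEq α] {S : Finset (α × α)}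
    {σ : α → α} (hσ : Function.Involutive σ) (hS : ∀ q ∈ S, q.2 = σ q.1) (q : α × α) :
    #{q' ∈ S | Overlaps q q'} ≤ 4 := by
  have hsub : {q' ∈ S | Overlaps q q'} ⊆
      {(q.1, σ q.1), (q.2, σ q.2), (σ q.1, q.1), (σ q.2, q.2)} := by
    intro q' hq'
    obtain ⟨hq'S, hov⟩ := mem_filter.1 hq'
    have h := hS q' hq'S
    have h' : q'.1 = σ q'.2 := by rw [h, hσ]
    simp only [mem_insert, mem_singleton]
    rcases hov with e | e | e | e
    · exact Or.inl (Prod.ext e (by rw [h, e]))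
    · exact Or.inr (Or.inl (Prod.ext e (by rw [h, e])))
    · exact Or.inr (Or.inr (Or.inl (Prod.ext (by rw [h', e]) e)))
    · exact Or.inr (Or.inr (Or.inr (Prod.ext (by rw [h', e]) e)))
  exact (card_le_card hsub).trans card_le_four

lemma theta_subset_dyads_product (n : ℕ) (i : Fin 5) : theta n i ⊆ dyads n ×ˢ dyads n := by
  fin_cases i <;> exact filter_subset _ _

lemma ne_of_mem_theta {n : ℕ} {i : Fin 5} {q : (ℕ × ℕ) × (ℕ × ℕ)} (hq : q ∈ theta n i) :
    q.1.1 ≠ q.1.2 ∧ q.2.1 ≠ q.2.2 :=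
  have hq' := mem_product.1 (theta_subset_dyads_product n i hq)
  ⟨(mem_dyads.1 hq'.1).2.2, (mem_dyads.1 hq'.2).2.2⟩

lemma snd_eq_fst_of_mem_theta_zero {n : ℕ} {q : (ℕ × ℕ) × (ℕ × ℕ)} (hq : q ∈ theta n 0) :
    q.2 = q.1 :=
  (mem_filter.1 hq).2

lemma snd_eq_swap_fst_of_mem_theta_one {n : ℕ} {q : (ℕ × ℕ) × (ℕ × ℕ)} (hq : q ∈ theta n 1) :
    q.2 = q.1.swap :=
  Prod.ext (mem_filter.1 hq).2.1 (mem_filter.1 hq).2.2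

lemma fst_ne_snd_of_mem_theta {n : ℕ} {i : Fin 5} (hi : i ≠ 0) {q : (ℕ × ℕ) × (ℕ × ℕ)}
    (hq : q ∈ theta n i) : q.1 ≠ q.2 := by
  have hd := (mem_dyads.1 (mem_product.1 (theta_subset_dyads_product n i hq)).1).2.2
  intro h
  fin_cases i <;> simp_all [theta, Prod.ext_iff]

lemma card_dyads_le_card_theta_zero (n : ℕ) : #(dyads n) ≤ #(theta n 0) := by
  refine card_le_card_of_injOn (fun d => (d, d)) (fun d hd => ?_)
    (fun d _ e _ h => congrArg Prod.fst h)
  simp [theta, mem_coe.1 hd]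

lemma card_dyads_le_card_theta_one (n : ℕ) : #(dyads n) ≤ #(theta n 1) := by
  refine card_le_card_of_injOn (fun d => (d, d.swap)) (fun d hd => ?_)
    (fun d _ e _ h => congrArg Prod.fst h)
  have := mem_dyads.1 hd
  simp [theta, mem_dyads, this, Ne.symm this.2.2]

lemma card_dyads_mul_le_card_of_injective {n : ℕ} {S : Finset ((ℕ × ℕ) × (ℕ × ℕ))}
    {ψ : ℕ × ℕ → ℕ → ℕ × ℕ} (hψ : ∀ d, Function.Injective (ψ d))
    (hS : ∀ d ∈ dyads n, ∀ l < n, l ≠ d.1 → l ≠ d.2 → (d, ψ d l) ∈ S) :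
    #(dyads n) * (n - 2) ≤ #S := by
  have hthird : ∀ d ∈ dyads n, #(range n \ {d.1, d.2}) = n - 2 := by
    intro d hd
    obtain ⟨h1, h2, h12⟩ := mem_dyads.1 hd
    rw [card_sdiff_of_subset (by simp [insert_subset_iff, h1, h2]), card_range, card_pair h12]
  calc #(dyads n) * (n - 2) = #((dyads n).sigma fun d => range n \ {d.1, d.2}) := by
        rw [card_sigma, sum_congr rfl hthird, sum_const, smul_eq_mul]
    _ ≤ #S := by
        refine card_le_card_of_injOn (fun t => (t.1, ψ t.1 t.2)) (fun t ht => ?_) ?_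
        · obtain ⟨hd, hl⟩ := mem_sigma.1 (mem_coe.1 ht)
          simp only [Finset.mem_sdiff, mem_range, mem_insert, mem_singleton, not_or] at hl
          exact hS t.1 hd t.2 hl.1 hl.2.1 hl.2.2
        · rintro ⟨d, l⟩ _ ⟨d', l'⟩ _ h
          simp only [Prod.mk.injEq] at h
          obtain ⟨rfl, h⟩ := h
          rw [hψ d h]

lemma card_dyads_mul_le_card_theta {i : Fin 5} (hi : 2 ≤ i) (n : ℕ) :
    #(dyads n) * (n - 2) ≤ #(theta n i) := by
  fin_cases i
  · exact absurd hi (by decide)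
  · exact absurd hi (by decide)
  · exact card_dyads_mul_le_card_of_injective (ψ := fun d l => (l, d.2))
      (fun d l l' h => (Prod.ext_iff.1 h).1) fun d hd l hl h1 h2 => by
        have := mem_dyads.1 hd; simp_all [theta, mem_dyads]
  · exact card_dyads_mul_le_card_of_injective (ψ := fun d l => (d.1, l))
      (fun d l l' h => (Prod.ext_iff.1 h).2) fun d hd l hl h1 h2 => by
        have := mem_dyads.1 hd; simp_all [theta, mem_dyads, Ne.symm h1]
  · exact card_dyads_mul_le_card_of_injective (ψ := fun d l => (d.2, l))
      (fun d l l' h => (Prod.ext_iff.1 h).2) fun d hd l hl h1 h2 => by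
        have := mem_dyads.1 hd; simp_all [theta, mem_dyads, Ne.symm h2]

lemma tendsto_card_theta_atTop (i : Fin 5) : Tendsto (fun n => (#(theta n i) : ℝ)) atTop atTop := by
  refine tendsto_atTop_mono' atTop ?_ tendsto_card_dyads_atTop
  filter_upwards [eventually_ge_atTop 3] with n hn
  norm_cast
  fin_cases i
  · exact card_dyads_le_card_theta_zero n
  · exact card_dyads_le_card_theta_one n
  all_goals
    refine le_trans ?_ (card_dyads_mul_le_card_theta (by decide) n)
    exact Nat.le_mul_of_pos_right _ (by omega)

lemma tendsto_card_dyads_div_card_theta {i : Fin 5} (hi : 2 ≤ i) :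
    Tendsto (fun n => (#(dyads n) : ℝ) / #(theta n i)) atTop (𝓝 0) := by
  have hlim : Tendsto (fun n : ℕ => 1 / ((n - 2 : ℕ) : ℝ)) atTop (𝓝 0) :=
    tendsto_const_nhds.div_atTop (tendsto_natCast_atTop_atTop.comp (tendsto_sub_atTop_nat 2))
  refine squeeze_zero' (Eventually.of_forall fun n => by positivity) ?_ hlim
  filter_upwards [eventually_ge_atTop 3] with n hn
  have hD : (0 : ℝ) < #(dyads n) := by
    rw [card_dyads]; exact_mod_cast Nat.mul_pos (by omega) (by omega)
  have hn2 : (0 : ℝ) < ((n - 2 : ℕ) : ℝ) := by exact_mod_cast Nat.sub_pos_of_lt hn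
  have hle : (#(dyads n) : ℝ) * (n - 2 : ℕ) ≤ #(theta n i) := by
    exact_mod_cast card_dyads_mul_le_card_theta hi n
  calc (#(dyads n) : ℝ) / #(theta n i) ≤ #(dyads n) / (#(dyads n) * (n - 2 : ℕ)) :=
        div_le_div_of_nonneg_left hD.le (by positivity) hle
    _ = 1 / ((n - 2 : ℕ) : ℝ) := by field_simp

lemma exists_card_filter_overlaps_le_theta (i : Fin 5) :
    ∃ b : ℕ → ℕ, (∀ n, ∀ q ∈ theta n i, #{q' ∈ theta n i | Overlaps q q'} ≤ b n) ∧
      Tendsto (fun n => (b n : ℝ) / #(theta n i)) atTop (𝓝 0) := by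
  rcases lt_or_ge i 2 with hi | hi
  · refine ⟨fun _ => 4, fun n q _ => ?_, ?_⟩
    · fin_cases i
      · exact card_filter_overlaps_le_four_of_involutive (σ := id) (fun _ => rfl)
          (fun _ hq => snd_eq_fst_of_mem_theta_zero hq) q
      · exact card_filter_overlaps_le_four_of_involutive Prod.swap_swap
          (fun _ hq => snd_eq_swap_fst_of_mem_theta_one hq) q
      all_goals exact absurd hi (by decide)
    · exact tendsto_const_nhds.div_atTop (tendsto_card_theta_atTop i)
  · refine ⟨fun n => 4 * #(dyads n), fun n q _ =>
      card_filter_overlaps_le_of_subset_product (theta_subset_dyads_product n i) q, ?_⟩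
    simpa [mul_div_assoc] using (tendsto_card_dyads_div_card_theta hi).const_mul 4

section SparseDependence

variable {Ω ι κ : Type*} [MeasurableSpace Ω] {μ : Measure Ω}

lemma memLp_two_of_integrable_mul_self_sq [IsFiniteMeasure μ] {X : Ω → ℝ}
    (hX : AEStronglyMeasurable X μ) (h : Integrable (fun ω => (X ω * X ω) ^ 2) μ) : MemLp X 2 μ := by
  have hXX : MemLp (fun ω => X ω * X ω) 2 μ := (memLp_two_iff_integrable_sq (hX.mul hX)).2 h
  exact (memLp_two_iff_integrable_sq hX).2 (by simpa only [sq] using hXX.integrable one_le_two)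

lemma covariance_le_of_variance_le [IsFiniteMeasure μ] {X Y : Ω → ℝ} {C : ℝ}
    (hX : MemLp X 2 μ) (hY : MemLp Y 2 μ) (hXC : Var[X; μ] ≤ C) (hYC : Var[Y; μ] ≤ C) :
    cov[X, Y; μ] ≤ C := by
  linarith [variance_sub hX hY, variance_nonneg (X - Y) μ]

variable {Z : ι → Ω → ℝ} {R : ι → ι → Prop} [DecidableRel R] {C : ℝ}

lemma variance_sum_le_of_sparse_dependence [IsFiniteMeasure μ] {s : Finset ι} {b : ℕ}
    (hZ : ∀ i ∈ s, MemLp (Z i) 2 μ) (hvar : ∀ i ∈ s, Var[Z i; μ] ≤ C)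
    (huncorr : ∀ i ∈ s, ∀ j ∈ s, ¬R i j → cov[Z i, Z j; μ] = 0)
    (hdeg : ∀ i ∈ s, #{j ∈ s | R i j} ≤ b) :
    Var[fun ω => ∑ i ∈ s, Z i ω; μ] ≤ #s * b * C := by
  rw [variance_fun_sum' hZ]
  calc ∑ i ∈ s, ∑ j ∈ s, cov[Z i, Z j; μ] ≤ ∑ _i ∈ s, (b * C : ℝ) := by
        refine sum_le_sum fun i hi => ?_
        have hC : 0 ≤ C := (variance_nonneg _ _).trans (hvar i hi)
        rw [← sum_filter_of_ne fun j hj hne => not_not.1 fun h => hne (huncorr i hi j hj h)]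
        calc ∑ j ∈ s with R i j, cov[Z i, Z j; μ] ≤ #{j ∈ s | R i j} • C :=
              sum_le_card_nsmul _ _ _ fun j hj => covariance_le_of_variance_le (hZ i hi)
                (hZ j (mem_filter.1 hj).1) (hvar i hi) (hvar j (mem_filter.1 hj).1)
          _ ≤ b * C := by rw [nsmul_eq_mul]; gcongr; exact_mod_cast hdeg i hi
    _ = #s * b * C := by rw [sum_const, nsmul_eq_mul, mul_assoc]

lemma variance_average_le_of_sparse_dependence [IsFiniteMeasure μ] {s : Finset ι} {b : ℕ}
    (hZ : ∀ i ∈ s, MemLp (Z i) 2 μ) (hvar : ∀ i ∈ s, Var[Z i; μ] ≤ C)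
    (huncorr : ∀ i ∈ s, ∀ j ∈ s, ¬R i j → cov[Z i, Z j; μ] = 0)
    (hdeg : ∀ i ∈ s, #{j ∈ s | R i j} ≤ b) :
    Var[fun ω => (#s : ℝ)⁻¹ * ∑ i ∈ s, Z i ω; μ] ≤ C * (b / #s) := by
  rw [variance_const_mul]
  rcases eq_or_ne (#s : ℝ) 0 with hs | hs
  · simp [hs]
  calc (#s : ℝ)⁻¹ ^ 2 * Var[fun ω => ∑ i ∈ s, Z i ω; μ] ≤ (#s : ℝ)⁻¹ ^ 2 * (#s * b * C) := by
        gcongr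
        exact variance_sum_le_of_sparse_dependence hZ hvar huncorr hdeg
    _ = C * (b / #s) := by field_simp

lemma tendstoInMeasure_const_of_tendsto_variance [IsFiniteMeasure μ] {l : Filter κ}
    {Y : κ → Ω → ℝ} {c : ℝ} (hY : ∀ᶠ n in l, MemLp (Y n) 2 μ) (hmean : ∀ᶠ n in l, μ[Y n] = c)
    (hvar : Tendsto (fun n => Var[Y n; μ]) l (𝓝 0)) :
    TendstoInMeasure μ Y l (fun _ => c) := by
  rw [tendstoInMeasure_iff_dist]
  intro ε hε
  have hbound : Tendsto (fun n => ENNReal.ofReal (Var[Y n; μ] / ε ^ 2)) l (𝓝 0) := by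
    simpa using ENNReal.tendsto_ofReal (hvar.div_const (ε ^ 2))
  refine tendsto_of_tendsto_of_tendsto_of_le_of_le' tendsto_const_nhds hbound
    (Eventually.of_forall fun _ => zero_le) ?_
  filter_upwards [hY, hmean] with n hn hc
  simpa only [Real.dist_eq, hc] using meas_ge_le_variance_div_sq hn hε

theorem tendstoInMeasure_average_of_sparse_dependence [IsProbabilityMeasure μ] {l : Filter κ}
    {T : κ → Finset ι} {b : κ → ℕ} {c : ℝ}
    (hZ : ∀ n, ∀ i ∈ T n, MemLp (Z i) 2 μ) (hmean : ∀ n, ∀ i ∈ T n, μ[Z i] = c)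
    (hvar : ∀ n, ∀ i ∈ T n, Var[Z i; μ] ≤ C)
    (huncorr : ∀ n, ∀ i ∈ T n, ∀ j ∈ T n, ¬R i j → cov[Z i, Z j; μ] = 0)
    (hdeg : ∀ n, ∀ i ∈ T n, #{j ∈ T n | R i j} ≤ b n) (hne : ∀ᶠ n in l, (T n).Nonempty)
    (hratio : Tendsto (fun n => (b n : ℝ) / #(T n)) l (𝓝 0)) :
    TendstoInMeasure μ (fun n ω => (#(T n) : ℝ)⁻¹ * ∑ i ∈ T n, Z i ω) l (fun _ => c) := by
  refine tendstoInMeasure_const_of_tendsto_variance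
    (Eventually.of_forall fun n => (memLp_finsetSum _ (hZ n)).const_mul _) ?_ ?_
  · filter_upwards [hne] with n hn
    rw [integral_const_mul, integral_finsetSum _ fun i hi => (hZ n i hi).integrable one_le_two,
      sum_congr rfl (hmean n), sum_const, nsmul_eq_mul, ← mul_assoc,
      inv_mul_cancel₀ (by exact_mod_cast hn.card_pos.ne'), one_mul]
  · refine squeeze_zero (fun n => variance_nonneg _ _)
      (fun n => variance_average_le_of_sparse_dependence (hZ n) (hvar n) (huncorr n) (hdeg n)) ?_
    simpa using hratio.const_mul C

end SparseDependence

section IdenticallyDistributed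

variable {Ω E : Type*} [MeasurableSpace Ω] [MeasurableSpace E] {μ : Measure Ω}
  {U V X₀ : Ω → E} {f g : E → ℝ}

lemma ProbabilityTheory.IndepFun.integral_comp_mul_comp_of_identDistrib (h : IndepFun U V μ)
    (hU : IdentDistrib U X₀ μ μ) (hV : IdentDistrib V X₀ μ μ) (hf : Measurable f)
    (hg : Measurable g) :
    ∫ ω, f (U ω) * g (V ω) ∂μ = μ[fun ω => f (X₀ ω)] * μ[fun ω => g (X₀ ω)] := by
  have h_mul := (h.comp hf hg).integral_fun_mul_eq_mul_integral
    (hf.comp_aemeasurable hU.aemeasurable_fst).aestronglyMeasurable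
    (hg.comp_aemeasurable hV.aemeasurable_fst).aestronglyMeasurable
  rwa [(hU.comp hf).integral_eq, (hV.comp hg).integral_eq] at h_mul

lemma ProbabilityTheory.IndepFun.memLp_two_comp_mul_comp_of_identDistrib (h : IndepFun U V μ)
    (hU : IdentDistrib U X₀ μ μ) (hV : IdentDistrib V X₀ μ μ) (hf : Measurable f)
    (hg : Measurable g) (hf₂ : MemLp (fun ω => f (X₀ ω)) 2 μ)
    (hg₂ : MemLp (fun ω => g (X₀ ω)) 2 μ) :
    MemLp (fun ω => f (U ω) * g (V ω)) 2 μ := by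
  have hfU : Integrable (fun ω => f (U ω) ^ 2) μ :=
    ((hU.comp (hf.pow_const 2)).integrable_iff).2 hf₂.integrable_sq
  have hgV : Integrable (fun ω => g (V ω) ^ 2) μ :=
    ((hV.comp (hg.pow_const 2)).integrable_iff).2 hg₂.integrable_sq
  refine (memLp_two_iff_integrable_sq ((hf.comp_aemeasurable hU.aemeasurable_fst).mul
    (hg.comp_aemeasurable hV.aemeasurable_fst)).aestronglyMeasurable).2 ?_
  simp only [Pi.mul_apply, Function.comp_apply, mul_pow]
  exact (h.comp (hf.pow_const 2) (hg.pow_const 2)).integrable_mul hfU hgV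

lemma ProbabilityTheory.IndepFun.variance_comp_mul_comp_le_of_identDistrib [IsProbabilityMeasure μ]
    (h : IndepFun U V μ) (hU : IdentDistrib U X₀ μ μ) (hV : IdentDistrib V X₀ μ μ)
    (hf : Measurable f) (hg : Measurable g) :
    Var[fun ω => f (U ω) * g (V ω); μ] ≤
      μ[fun ω => f (X₀ ω) ^ 2] * μ[fun ω => g (X₀ ω) ^ 2] := by
  refine (variance_le_expectation_sq ((hf.comp_aemeasurable hU.aemeasurable_fst).mul
    (hg.comp_aemeasurable hV.aemeasurable_fst)).aestronglyMeasurable).trans_eq ?_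
  simp only [Pi.pow_apply, Pi.mul_apply, Function.comp_apply, mul_pow]
  exact h.integral_comp_mul_comp_of_identDistrib hU hV (hf.pow_const 2) (hg.pow_const 2)

end IdenticallyDistributed

section DyadCovariates

variable {Ω E : Type*} [MeasurableSpace Ω] [MeasurableSpace E] {μ : Measure Ω}
  {x : ℕ → ℕ → Ω → E} {f g : E → ℝ}

/-- With `f = (· a)` and `g = (· b)`, the `(a, b)` entry of `x_{jk} x_{lm}ᵀ` for the dyad pair
`q = ((j,k),(l,m))`. -/
def pairProduct (x : ℕ → ℕ → Ω → E) (f g : E → ℝ) (q : (ℕ × ℕ) × (ℕ × ℕ)) (ω : Ω) : ℝ :=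
  f (x q.1.1 q.1.2 ω) * g (x q.2.1 q.2.2 ω)

lemma indepFun_pair_pair_of_not_overlaps
    (hx : iIndepFun (fun d : {d : ℕ × ℕ // d.1 ≠ d.2} => x d.1.1 d.1.2) μ)
    (hxm : ∀ j k, Measurable (x j k)) {q q' : (ℕ × ℕ) × (ℕ × ℕ)}
    (hq₁ : q.1.1 ≠ q.1.2) (hq₂ : q.2.1 ≠ q.2.2) (hq'₁ : q'.1.1 ≠ q'.1.2) (hq'₂ : q'.2.1 ≠ q'.2.2)
    (h : ¬Overlaps q q') :
    IndepFun (fun ω => (x q.1.1 q.1.2 ω, x q.2.1 q.2.2 ω))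
      (fun ω => (x q'.1.1 q'.1.2 ω, x q'.2.1 q'.2.2 ω)) μ := by
  simp only [Overlaps, not_or] at h
  exact hx.indepFun_prodMk_prodMk (fun d => hxm _ _) ⟨q.1, hq₁⟩ ⟨q.2, hq₂⟩ ⟨q'.1, hq'₁⟩
    ⟨q'.2, hq'₂⟩ (fun e => h.1 (congrArg Subtype.val e).symm)
    (fun e => h.2.2.1 (congrArg Subtype.val e).symm)
    (fun e => h.2.1 (congrArg Subtype.val e).symm) (fun e => h.2.2.2 (congrArg Subtype.val e).symm)

lemma covariance_pairProduct_eq_zero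
    (hx : iIndepFun (fun d : {d : ℕ × ℕ // d.1 ≠ d.2} => x d.1.1 d.1.2) μ)
    (hxm : ∀ j k, Measurable (x j k)) (hf : Measurable f) (hg : Measurable g)
    {q q' : (ℕ × ℕ) × (ℕ × ℕ)}
    (hq₁ : q.1.1 ≠ q.1.2) (hq₂ : q.2.1 ≠ q.2.2) (hq'₁ : q'.1.1 ≠ q'.1.2) (hq'₂ : q'.2.1 ≠ q'.2.2)
    (h : ¬Overlaps q q') (hZ : MemLp (pairProduct x f g q) 2 μ)
    (hZ' : MemLp (pairProduct x f g q') 2 μ) :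
    cov[pairProduct x f g q, pairProduct x f g q'; μ] = 0 :=
  have hφ : Measurable fun v : E × E => f v.1 * g v.2 :=
    (hf.comp measurable_fst).mul (hg.comp measurable_snd)
  ((indepFun_pair_pair_of_not_overlaps hx hxm hq₁ hq₂ hq'₁ hq'₂ h).comp hφ hφ).covariance_eq_zero
    hZ hZ'

end DyadCovariates

section ConfigurationAverages

variable {Ω E : Type*} [MeasurableSpace Ω] [MeasurableSpace E] {μ : Measure Ω}
  [IsProbabilityMeasure μ] {x : ℕ → ℕ → Ω → E} {f g : E → ℝ}

theorem tendstoInMeasure_average_theta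
    (hx : iIndepFun (fun d : {d : ℕ × ℕ // d.1 ≠ d.2} => x d.1.1 d.1.2) μ)
    (hxm : ∀ j k, Measurable (x j k)) (hf : Measurable f) (hg : Measurable g) (i : Fin 5)
    {c C : ℝ} (hZ : ∀ n, ∀ q ∈ theta n i, MemLp (pairProduct x f g q) 2 μ)
    (hmean : ∀ n, ∀ q ∈ theta n i, μ[pairProduct x f g q] = c)
    (hvar : ∀ n, ∀ q ∈ theta n i, Var[pairProduct x f g q; μ] ≤ C) :
    TendstoInMeasure μ
      (fun n ω => (#(theta n i) : ℝ)⁻¹ * ∑ q ∈ theta n i, pairProduct x f g q ω) atTop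
      (fun _ => c) := by
  obtain ⟨b, hdeg, hratio⟩ := exists_card_filter_overlaps_le_theta i
  have hne : ∀ᶠ n in atTop, (theta n i).Nonempty := by
    filter_upwards [(tendsto_card_theta_atTop i).eventually_gt_atTop 0] with n hn
    exact card_pos.1 (by exact_mod_cast hn)
  refine tendstoInMeasure_average_of_sparse_dependence hZ hmean hvar
    (fun n q hq q' hq' h => ?_) hdeg hne hratio
  exact covariance_pairProduct_eq_zero hx hxm hf hg (ne_of_mem_theta hq).1 (ne_of_mem_theta hq).2
    (ne_of_mem_theta hq').1 (ne_of_mem_theta hq').2 h (hZ n q hq) (hZ n q' hq')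

theorem tendstoInMeasure_average_theta_of_ne_zero
    (hx : iIndepFun (fun d : {d : ℕ × ℕ // d.1 ≠ d.2} => x d.1.1 d.1.2) μ)
    (hxm : ∀ j k, Measurable (x j k)) (hident : ∀ j k, j ≠ k → IdentDistrib (x j k) (x 0 1) μ μ)
    (hf : Measurable f) (hg : Measurable g) {i : Fin 5} (hi : i ≠ 0)
    (hf₂ : MemLp (fun ω => f (x 0 1 ω)) 2 μ) (hg₂ : MemLp (fun ω => g (x 0 1 ω)) 2 μ) :
    TendstoInMeasure μ
      (fun n ω => (#(theta n i) : ℝ)⁻¹ * ∑ q ∈ theta n i, pairProduct x f g q ω) atTop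
      (fun _ => μ[fun ω => f (x 0 1 ω)] * μ[fun ω => g (x 0 1 ω)]) := by
  have hpair : ∀ n, ∀ q ∈ theta n i, IndepFun (x q.1.1 q.1.2) (x q.2.1 q.2.2) μ ∧
      IdentDistrib (x q.1.1 q.1.2) (x 0 1) μ μ ∧ IdentDistrib (x q.2.1 q.2.2) (x 0 1) μ μ := by
    intro n q hq
    obtain ⟨h₁, h₂⟩ := ne_of_mem_theta hq
    refine ⟨hx.indepFun (i := ⟨q.1, h₁⟩) (j := ⟨q.2, h₂⟩) fun e => ?_, hident _ _ h₁,
      hident _ _ h₂⟩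
    exact fst_ne_snd_of_mem_theta hi hq (congrArg Subtype.val e)
  refine tendstoInMeasure_average_theta hx hxm hf hg i
    (C := μ[fun ω => f (x 0 1 ω) ^ 2] * μ[fun ω => g (x 0 1 ω) ^ 2])
    (fun n q hq => ?_) (fun n q hq => ?_) (fun n q hq => ?_)
  all_goals obtain ⟨hind, hU, hV⟩ := hpair n q hq
  · exact hind.memLp_two_comp_mul_comp_of_identDistrib hU hV hf hg hf₂ hg₂
  · exact hind.integral_comp_mul_comp_of_identDistrib hU hV hf hg
  · exact hind.variance_comp_mul_comp_le_of_identDistrib hU hV hf hg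

theorem tendstoInMeasure_average_theta_zero
    (hx : iIndepFun (fun d : {d : ℕ × ℕ // d.1 ≠ d.2} => x d.1.1 d.1.2) μ)
    (hxm : ∀ j k, Measurable (x j k)) (hident : ∀ j k, j ≠ k → IdentDistrib (x j k) (x 0 1) μ μ)
    (hf : Measurable f) (hg : Measurable g)
    (hfg : MemLp (fun ω => f (x 0 1 ω) * g (x 0 1 ω)) 2 μ) :
    TendstoInMeasure μ
      (fun n ω => (#(theta n 0) : ℝ)⁻¹ * ∑ q ∈ theta n 0, pairProduct x f g q ω) atTop
      (fun _ => μ[fun ω => f (x 0 1 ω) * g (x 0 1 ω)]) := by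
  have hφ : Measurable fun v => f v * g v := hf.mul hg
  have hdiag : ∀ n, ∀ q ∈ theta n 0,
      IdentDistrib (pairProduct x f g q) (fun ω => f (x 0 1 ω) * g (x 0 1 ω)) μ μ := by
    intro n q hq
    have h := (hident _ _ (ne_of_mem_theta hq).1).comp hφ
    unfold pairProduct
    rwa [snd_eq_fst_of_mem_theta_zero hq]
  exact tendstoInMeasure_average_theta hx hxm hf hg 0 (fun n q hq => (hdiag n q hq).memLp_iff.2 hfg)
    (fun n q hq => (hdiag n q hq).integral_eq) (fun n q hq => (hdiag n q hq).variance_eq.le)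

end ConfigurationAverages

/-- For i.i.d. covariate vectors with entrywise `E[(x xᵀ)²] < ∞`, the configuration-set
averages `|Θ_i|⁻¹ Σ_{((j,k),(l,m))∈Θ_i} x_{jk} x_{lm}ᵀ` converge in probability, entrywise,
to `E[x] E[x]ᵀ` for `i ∈ {2,…,5}` and to `E[x xᵀ]` for `i = 1`. -/
theorem covariate_configuration_averages_consistent {Ω : Type} [MeasureSpace Ω]
    [IsProbabilityMeasure (volume : Measure Ω)]
    (p : ℕ) (x : ℕ → ℕ → Ω → Fin p → ℝ)
    (hxmeas : ∀ j k, Measurable (x j k))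
    (hx_ident : ∀ j k l m : ℕ, j ≠ k → l ≠ m →
      Measure.map (x j k) volume = Measure.map (x l m) volume)
    (hx_indep : iIndepFun
      (fun q : {q : ℕ × ℕ // q.1 ≠ q.2} => x q.1.1 q.1.2) volume)
    (hx_mom : ∀ a b : Fin p, Integrable (fun ω => (x 0 1 ω a * x 0 1 ω b) ^ 2) volume) :
    ∀ a b : Fin p,
      (∀ i : Fin 5, i ≠ 0 →
        TendstoInMeasure volume
          (fun n ω => ((theta n i).card : ℝ)⁻¹ *
            ∑ q ∈ theta n i, x q.1.1 q.1.2 ω a * x q.2.1 q.2.2 ω b)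
          atTop (fun _ => (∫ ω, x 0 1 ω a) * ∫ ω, x 0 1 ω b)) ∧
      TendstoInMeasure volume
        (fun n ω => ((theta n 0).card : ℝ)⁻¹ *
          ∑ q ∈ theta n 0, x q.1.1 q.1.2 ω a * x q.2.1 q.2.2 ω b)
        atTop (fun _ => ∫ ω, x 0 1 ω a * x 0 1 ω b) := by
  intro a b
  have hident : ∀ j k, j ≠ k → IdentDistrib (x j k) (x 0 1) :=
    fun j k hjk => ⟨(hxmeas j k).aemeasurable, (hxmeas 0 1).aemeasurable,
      hx_ident j k 0 1 hjk zero_ne_one⟩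
  have hcoord : ∀ a, Measurable fun v : Fin p → ℝ => v a := measurable_pi_apply
  have hcoord₂ : ∀ a, MemLp (fun ω => x 0 1 ω a) 2 volume := fun a =>
    memLp_two_of_integrable_mul_self_sq ((hcoord a).comp (hxmeas 0 1)).aestronglyMeasurable
      (hx_mom a a)
  have hprod₂ : MemLp (fun ω => x 0 1 ω a * x 0 1 ω b) 2 volume :=
    (memLp_two_iff_integrable_sq (((hcoord a).comp (hxmeas 0 1)).mul
      ((hcoord b).comp (hxmeas 0 1))).aestronglyMeasurable).2 (hx_mom a b)
  exact ⟨fun i hi => (tendstoInMeasure_average_theta_of_ne_zero (f := (· a)) (g := (· b))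
      hx_indep hxmeas hident (hcoord a) (hcoord b) hi (hcoord₂ a) (hcoord₂ b) :),
    (tendstoInMeasure_average_theta_zero (f := (· a)) (g := (· b))
      hx_indep hxmeas hident (hcoord a) (hcoord b) hprod₂ :)⟩
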